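/- arXiv:1205.0371 — 5 statements merged into one kernel-verified Lean document; each statement's English description precedes it below -/
import Mathlib

section
/- Let d be a squarefree positive integer with d ≡ 2 or 3 (mod 4) such that ℤ[√d] is a unique factorization domain, and let u be a unit of ℤ[√d] with N(u) = −1. Then α = 1 + u is irreducible in ℤ[√d] if and only if d = 2 and u ∈ {1+√2, 1−√2, −1+√2, −1−√2}. -/
/-!
Since `N u = -1`, the norm of `1 + u` is `2 · Re u`. The element `2` is never prime in `ℤ[√d]`
(it divides `(d + √d)(d - √d) = d² - d` but neither factor), so in a UFD it has a prime factor `π`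
of norm `±2`; as `π ∣ 2 ∣ N(1 + u) = (1 + u)(1 + ū)`, `π` or its conjugate divides `1 + u`.
Hence an irreducible `1 + u` is associated to an element of norm `±2`, which forces `Re u = ±1`
and then `d · (Im u)² = 2`. Conversely `Re u = ±1` makes `|N(1 + u)| = 2` prime.
-/

theorem Int.eq_two_and_natAbs_eq_one_of_mul_mul_self_eq_two {d : ℕ} {b : ℤ}
    (h : (d : ℤ) * b * b = 2) : d = 2 ∧ b.natAbs = 1 := by
  have h' : d * b.natAbs * b.natAbs = 2 := by
    simpa [Int.natAbs_mul] using congrArg Int.natAbs h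
  have hb : b.natAbs = 1 := Nat.isUnit_iff.mp (Nat.squarefree_two _ ⟨d, by rw [← h']; ring⟩)
  rw [hb] at h'
  exact ⟨by simpa using h', hb⟩

namespace Zsqrtd

variable {d : ℤ}

def natAbsNormHom (d : ℤ) : ℤ√d →* ℕ :=
  Int.natAbsHom.toMonoidHom.comp normMonoidHom

instance : IsLocalHom (natAbsNormHom d) :=
  ⟨fun _ h => norm_eq_one_iff.mp (Nat.isUnit_iff.mp h)⟩

theorem irreducible_of_natAbs_norm_prime {z : ℤ√d} (h : z.norm.natAbs.Prime) :
    Irreducible z :=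
  Irreducible.of_map (f := natAbsNormHom d) ((Nat.irreducible_iff_nat_prime _).mpr h)

theorem natAbs_norm_eq_of_associated {x y : ℤ√d} (h : Associated x y) :
    x.norm.natAbs = y.norm.natAbs :=
  associated_iff_eq.mp (h.map (natAbsNormHom d))

theorem norm_one_add (z : ℤ√d) : (1 + z).norm = 1 + 2 * z.re + z.norm := by
  simp only [norm_def, re_add, im_add, re_one, im_one]
  ring

theorem not_prime_two : ¬ Prime (2 : ℤ√d) := by
  intro h
  have h2 : (2 : ℤ√d) = ((2 : ℤ) : ℤ√d) := by norm_cast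
  have hprod : ((d : ℤ√d) + sqrtd) * ((d : ℤ√d) - sqrtd) = ((d * (d - 1) : ℤ) : ℤ√d) := by
    ext <;> simp; ring
  have hdvd : (2 : ℤ√d) ∣ ((d : ℤ√d) + sqrtd) * ((d : ℤ√d) - sqrtd) := by
    rw [hprod, h2, intCast_dvd_intCast]
    exact even_iff_two_dvd.mp (Int.even_mul_pred_self d)
  rcases h.dvd_or_dvd hdvd with h' | h' <;> rw [h2, intCast_dvd] at h' <;> simp at h'

theorem exists_dvd_two_natAbs_norm_eq_two (h : ¬ Irreducible (2 : ℤ√d)) :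
    ∃ x : ℤ√d, x ∣ 2 ∧ x.norm.natAbs = 2 := by
  have h2 : ¬ IsUnit (2 : ℤ√d) := by
    rw [← norm_eq_one_iff, show (2 : ℤ√d) = ((2 : ℤ) : ℤ√d) by norm_cast, norm_intCast]
    norm_num
  obtain ⟨x, y, hxy, hx, hy⟩ : ∃ x y : ℤ√d, 2 = x * y ∧ ¬ IsUnit x ∧ ¬ IsUnit y := by
    simpa [irreducible_iff, h2] using h
  rw [← norm_eq_one_iff] at hx hy
  have hprod : x.norm.natAbs * y.norm.natAbs = 4 := by
    rw [← Int.natAbs_mul, ← norm_mul, ← hxy,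
      show (2 : ℤ√d) = ((2 : ℤ) : ℤ√d) by norm_cast, norm_intCast]
    rfl
  refine ⟨x, ⟨y, hxy⟩, ?_⟩
  have : x.norm.natAbs ≤ 4 := Nat.le_of_dvd (by norm_num) ⟨_, hprod.symm⟩
  interval_cases h : x.norm.natAbs <;> omega

theorem dvd_or_star_dvd_of_dvd_norm {x z : ℤ√d} (hx : Prime x)
    (h : x ∣ (z.norm : ℤ√d)) : x ∣ z ∨ star x ∣ z := by
  rw [norm_eq_mul_conj] at h
  refine (hx.dvd_or_dvd h).imp id fun hxz => ?_
  simpa only [starRingEnd_apply, star_star] using map_dvd (starRingEnd (ℤ√d)) hxz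

theorem natAbs_norm_eq_two_of_irreducible [IsDomain (ℤ√d)] [UniqueFactorizationMonoid (ℤ√d)]
    {α : ℤ√d} (hα : Irreducible α) (heven : 2 ∣ α.norm) : α.norm.natAbs = 2 := by
  obtain ⟨x, hx2, hx⟩ := exists_dvd_two_natAbs_norm_eq_two (d := d)
    (not_prime_two ∘ UniqueFactorizationMonoid.irreducible_iff_prime.mp)
  have hxprime : Prime x := UniqueFactorizationMonoid.irreducible_iff_prime.mp
    (irreducible_of_natAbs_norm_prime (hx ▸ Nat.prime_two))
  have hxα : x ∣ (α.norm : ℤ√d) :=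
    hx2.trans (by exact_mod_cast (Int.cast_dvd_cast _ _ heven : ((2 : ℤ) : ℤ√d) ∣ _))
  obtain ⟨π, hπα, hπ⟩ : ∃ π : ℤ√d, π ∣ α ∧ π.norm.natAbs = 2 := by
    rcases dvd_or_star_dvd_of_dvd_norm hxprime hxα with h | h
    · exact ⟨x, h, hx⟩
    · exact ⟨star x, h, by rwa [norm_conj]⟩
  have hπirr : Irreducible π := irreducible_of_natAbs_norm_prime (hπ ▸ Nat.prime_two)
  rw [← natAbs_norm_eq_of_associated (hπirr.associated_of_dvd hα hπα), hπ]

theorem natAbs_re_eq_one_and_natAbs_im_eq_one_iff {z : ℤ√d} :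
    z.re.natAbs = 1 ∧ z.im.natAbs = 1 ↔
      z = 1 + sqrtd ∨ z = 1 - sqrtd ∨ z = -1 + sqrtd ∨ z = -1 - sqrtd := by
  simp only [Zsqrtd.ext_iff, re_add, im_add, re_sub, im_sub, re_neg, im_neg, re_one, im_one,
    re_sqrtd, im_sqrtd]
  omega

end Zsqrtd

open Zsqrtd

theorem mersenne_real_quadratic_irreducible_norm_neg_one_general
    (d : ℕ)
    [Zsqrtd.Nonsquare d] [UniqueFactorizationMonoid (ℤ√(d : ℤ))]
    (u : (ℤ√(d : ℤ))ˣ) (hu : Zsqrtd.norm (u : ℤ√(d : ℤ)) = -1) :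
    Irreducible (1 + (u : ℤ√(d : ℤ))) ↔
      d = 2 ∧ ((u : ℤ√(d : ℤ)) = 1 + Zsqrtd.sqrtd ∨ (u : ℤ√(d : ℤ)) = 1 - Zsqrtd.sqrtd ∨
        (u : ℤ√(d : ℤ)) = -1 + Zsqrtd.sqrtd ∨ (u : ℤ√(d : ℤ)) = -1 - Zsqrtd.sqrtd) := by
  set z : ℤ√(d : ℤ) := (u : ℤ√(d : ℤ))
  have hnorm : (1 + z).norm = 2 * z.re := by
    rw [norm_one_add, hu]
    ring
  rw [← natAbs_re_eq_one_and_natAbs_im_eq_one_iff]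
  constructor
  · intro hirr
    have hre : z.re.natAbs = 1 := by
      simpa [hnorm, Int.natAbs_mul] using
        natAbs_norm_eq_two_of_irreducible hirr (hnorm ▸ dvd_mul_right 2 _)
    have him : (d : ℤ) * z.im * z.im = 2 := by
      have hre2 : z.re * z.re = 1 := by
        rw [← Int.natAbs_mul_self', hre]
        rfl
      rw [norm_def] at hu
      linarith
    exact (Int.eq_two_and_natAbs_eq_one_of_mul_mul_self_eq_two him).imp_right (⟨hre, ·⟩)
  · rintro ⟨-, hre, -⟩
    apply irreducible_of_natAbs_norm_prime
    rw [hnorm, Int.natAbs_mul, hre]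
    exact Nat.prime_two

/-- **Theorem 1.** Let `d` be a squarefree positive integer with `d ≡ 2, 3 (mod 4)`
such that `ℤ√d` is a unique factorization domain, and let `u` be a unit of `ℤ√d`
with norm `-1`.  Then `α = 1 + u` is irreducible in `ℤ√d` if and only if `d = 2` and
`u ∈ {1+√2, 1-√2, -1+√2, -1-√2}`. -/
theorem mersenne_real_quadratic_irreducible_norm_neg_one
    (d : ℕ) (hd : 0 < d) (hsf : Squarefree d) (hmod : d % 4 = 2 ∨ d % 4 = 3)
    [Zsqrtd.Nonsquare d] [UniqueFactorizationMonoid (ℤ√(d : ℤ))]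
    (u : (ℤ√(d : ℤ))ˣ) (hu : Zsqrtd.norm (u : ℤ√(d : ℤ)) = -1) :
    Irreducible (1 + (u : ℤ√(d : ℤ))) ↔
      d = 2 ∧ ((u : ℤ√(d : ℤ)) = 1 + Zsqrtd.sqrtd ∨ (u : ℤ√(d : ℤ)) = 1 - Zsqrtd.sqrtd ∨
        (u : ℤ√(d : ℤ)) = -1 + Zsqrtd.sqrtd ∨ (u : ℤ√(d : ℤ)) = -1 - Zsqrtd.sqrtd) :=
  mersenne_real_quadratic_irreducible_norm_neg_one_general d u hu
end

section
/- Let p ≥ 5 be a rational prime such that N(M_{p,α}) is a rational prime, and suppose N(M_{p,α}) = x² + 7y² for integers x, y. Then x ≡ 0 (mod 4) and y ≡ 3 or −3 (mod 8). -/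
/-- `α = 2 + √2` in `ℤ√2`. -/
def alphaZ : ℤ√2 := 2 + Zsqrtd.sqrtd

/-- The Mersenne number `M_{n,α} = (α^n - 1)/(α - 1) = (α^n - 1)·(√2 - 1)` in `ℤ√2`,
where `α = 2 + √2` (note `(α - 1)⁻¹ = (1 + √2)⁻¹ = √2 - 1`). -/
def Mers (n : ℕ) : ℤ√2 := (alphaZ ^ n - 1) * (Zsqrtd.sqrtd - 1)

/-- `v n` is the rational part of `(1 + √2)^n`, i.e. `(1+√2)^n = v n + (w n)·√2`. -/
def vCoeff (n : ℕ) : ℤ := (((1 + Zsqrtd.sqrtd : ℤ√2)) ^ n).re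

/-- `w n` is the coefficient of `√2` in `(1 + √2)^n`, i.e. `(1+√2)^n = v n + (w n)·√2`. -/
def wCoeff (n : ℕ) : ℤ := (((1 + Zsqrtd.sqrtd : ℤ√2)) ^ n).im
/-!
Since `N(α) = 2` and `N(√2 - 1) = -1`, expanding `N(α^n - 1)` gives
`N(M_{n,α}) = 2·Re(α^n) - 1 - 2^n`. From `α² = 2(3 + 2√2)` we get `4 ∣ α^n` for `n ≥ 4`, and
`Re(α·z) = 2(Re z + Im z)` then gives `8 ∣ Re(α^n)` for `n ≥ 5`. Hence `N(M_{n,α}) ≡ -1 (mod 16)`,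
and `x² + 7y² ≡ -1 (mod 16)` is only possible with `x ≡ 0 (mod 4)` and `y ≡ ±3 (mod 8)`.
-/

namespace Zsqrtd

variable {d : ℤ}

theorem norm_sub_one (z : ℤ√d) : (z - 1).norm = z.norm - 2 * z.re + 1 := by
  simp only [norm_def, re_sub, im_sub, re_one, im_one]
  ring

theorem norm_pow (z : ℤ√d) (n : ℕ) : (z ^ n).norm = z.norm ^ n :=
  map_pow normMonoidHom z n

end Zsqrtd

open Zsqrtd

theorem norm_alphaZ : alphaZ.norm = 2 := by
  simp [alphaZ, norm_def]

theorem norm_mers (n : ℕ) : (Mers n).norm = 2 * (alphaZ ^ n).re - 1 - 2 ^ n := by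
  have h : (sqrtd - 1 : ℤ√2).norm = -1 := by simp [norm_def]
  rw [Mers, norm_mul, h, norm_sub_one, norm_pow, norm_alphaZ]
  ring

theorem re_alphaZ_mul (z : ℤ√2) : (alphaZ * z).re = 2 * (z.re + z.im) := by
  simp only [alphaZ, re_mul, re_add, im_add, re_ofNat, im_ofNat, re_sqrtd, im_sqrtd]
  ring

theorem alphaZ_sq : alphaZ ^ 2 = 2 * (3 + 2 * sqrtd) := by
  ext <;> simp [alphaZ, sq]

theorem four_dvd_alphaZ_pow {n : ℕ} (hn : 4 ≤ n) : (4 : ℤ√2) ∣ alphaZ ^ n := by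
  obtain ⟨m, rfl⟩ := Nat.exists_eq_add_of_le hn
  rw [pow_add, show 4 = 2 * 2 from rfl, pow_mul, alphaZ_sq]
  exact Dvd.dvd.mul_right ⟨(3 + 2 * sqrtd) ^ 2, by ring⟩ _

theorem eight_dvd_re_alphaZ_pow {n : ℕ} (hn : 5 ≤ n) : 8 ∣ (alphaZ ^ n).re := by
  obtain ⟨m, rfl⟩ := Nat.exists_eq_add_of_le' hn
  obtain ⟨h4re, h4im⟩ := (intCast_dvd 4 _).mp (four_dvd_alphaZ_pow (n := m + 4) (by omega))
  rw [show m + 5 = (m + 4) + 1 by omega, pow_succ', re_alphaZ_mul]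
  exact mul_dvd_mul_left 2 (dvd_add h4re h4im)

theorem norm_mers_modEq_neg_one {n : ℕ} (hn : 5 ≤ n) : (Mers n).norm ≡ -1 [ZMOD 16] := by
  obtain ⟨a, ha⟩ := eight_dvd_re_alphaZ_pow hn
  obtain ⟨m, rfl⟩ := Nat.exists_eq_add_of_le' hn
  rw [norm_mers, ha, Int.modEq_iff_dvd]
  exact ⟨2 ^ (m + 1) - a, by ring⟩

theorem zmod16_cast_of_sq_add_seven_mul_sq_eq_neg_one :
    ∀ a b : ZMod 16, a ^ 2 + 7 * b ^ 2 = -1 →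
      (a.cast : ZMod 4) = 0 ∧ ((b.cast : ZMod 8) = 3 ∨ (b.cast : ZMod 8) = -3) := by
  decide

theorem modEq_of_sq_add_seven_mul_sq_modEq_neg_one {x y : ℤ}
    (h : x ^ 2 + 7 * y ^ 2 ≡ -1 [ZMOD 16]) :
    x ≡ 0 [ZMOD 4] ∧ (y ≡ 3 [ZMOD 8] ∨ y ≡ -3 [ZMOD 8]) := by
  have h16 := (ZMod.intCast_eq_intCast_iff _ _ 16).mpr h
  push_cast at h16
  obtain ⟨hx, hy⟩ := zmod16_cast_of_sq_add_seven_mul_sq_eq_neg_one _ _ h16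
  rw [ZMod.cast_intCast (by norm_num)] at hx
  rw [ZMod.cast_intCast (by norm_num)] at hy
  refine ⟨(ZMod.intCast_eq_intCast_iff _ _ 4).mp (by simpa using hx),
    hy.imp (fun h ↦ (ZMod.intCast_eq_intCast_iff _ _ 8).mp (by simpa using h))
      (fun h ↦ (ZMod.intCast_eq_intCast_iff _ _ 8).mp (by simpa using h))⟩

theorem norm_mersenne_rep_four_dvd_and_y_mod_eight_general
    (p : ℕ) (hp5 : 5 ≤ p)
    (x y : ℤ) (hxy : Zsqrtd.norm (Mers p) = x ^ 2 + 7 * y ^ 2) :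
    x ≡ 0 [ZMOD 4] ∧ (y ≡ 3 [ZMOD 8] ∨ y ≡ -3 [ZMOD 8]) :=
  modEq_of_sq_add_seven_mul_sq_modEq_neg_one (hxy ▸ norm_mers_modEq_neg_one hp5)

/-- **Lemma (§3).** If `p ≥ 5` is prime, `N(M_{p,α})` is a rational prime and
`N(M_{p,α}) = x² + 7y²`, then `x ≡ 0 (mod 4)` and `y ≡ ±3 (mod 8)`. -/
theorem norm_mersenne_rep_four_dvd_and_y_mod_eight
    (p : ℕ) (hp5 : 5 ≤ p) (hp : Nat.Prime p)
    (hprime : Prime (Zsqrtd.norm (Mers p)))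
    (x y : ℤ) (hxy : Zsqrtd.norm (Mers p) = x ^ 2 + 7 * y ^ 2) :
    x ≡ 0 [ZMOD 4] ∧ (y ≡ 3 [ZMOD 8] ∨ y ≡ -3 [ZMOD 8]) :=
  norm_mersenne_rep_four_dvd_and_y_mod_eight_general p hp5 x y hxy
end

section
/- Let n ≥ 1 be odd and not divisible by 3. If n ≡ 1 (mod 3) then N(M_{n,α}) ≡ 1 (mod 7), and if n ≡ 2 (mod 3) then N(M_{n,α}) ≡ 4 (mod 7). In particular N(M_{n,α}) is a quadratic residue modulo 7. -/
namespace Zsqrtd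

lemma intCast_norm_eq_lift_mul_lift {R : Type*} [CommRing R] {d : ℤ} (s : R) (hs : s * s = d)
    (x : ℤ√d) :
    (x.norm : R) = lift ⟨s, hs⟩ x * lift ⟨-s, by rwa [neg_mul_neg]⟩ x := by
  simp only [lift_apply_apply, norm_def, Int.cast_sub, Int.cast_mul]
  linear_combination ((x.im : R) * x.im) * hs

end Zsqrtd

lemma intCast_norm_mers_eq_of_odd {n : ℕ} (hodd : Odd n) :
    ((Mers n).norm : ZMod 7) = 2 * (5 ^ (n % 6) - 1) := by
  rw [Zsqrtd.intCast_norm_eq_lift_mul_lift (3 : ZMod 7) (by decide)]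
  simp only [Mers, alphaZ, map_mul, map_sub, map_pow, map_add, map_ofNat, map_one,
    Zsqrtd.lift_apply_apply, Zsqrtd.re_sqrtd, Zsqrtd.im_sqrtd, Int.cast_zero, Int.cast_one,
    zero_add, one_mul]
  rw [← pow_eq_pow_mod n (show (5 : ZMod 7) ^ 6 = 1 by decide),
    show (2 + 3 : ZMod 7) = 5 by decide, show (2 + -3 : ZMod 7) = -1 by decide,
    hodd.neg_one_pow]
  have hseven : (7 : ZMod 7) = 0 := by decide
  linear_combination (2 * (5 ^ n - 1 : ZMod 7)) * hseven

theorem norm_mersenne_mod_seven_general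
    (n : ℕ) (hodd : Odd n) (h3 : ¬ (3 ∣ n)) :
    (n % 3 = 1 → Zsqrtd.norm (Mers n) ≡ 1 [ZMOD 7]) ∧
    (n % 3 = 2 → Zsqrtd.norm (Mers n) ≡ 4 [ZMOD 7]) ∧
    IsSquare ((Zsqrtd.norm (Mers n) : ZMod 7)) := by
  have hcast := intCast_norm_mers_eq_of_odd hodd
  have hmod6 : n % 6 = 1 ∨ n % 6 = 5 := by
    have := Nat.odd_iff.mp hodd
    omega
  rcases hmod6 with hn | hn
  · have hone : ((Mers n).norm : ZMod 7) = 1 := by rw [hcast, hn]; decide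
    refine ⟨fun _ => (ZMod.intCast_eq_intCast_iff _ 1 7).mp (by exact_mod_cast hone),
      fun _ => by omega, ⟨1, by rw [hone, one_mul]⟩⟩
  · have hfour : ((Mers n).norm : ZMod 7) = 4 := by rw [hcast, hn]; decide
    refine ⟨fun _ => by omega,
      fun _ => (ZMod.intCast_eq_intCast_iff _ 4 7).mp (by exact_mod_cast hfour),
      ⟨2, by rw [hfour]; decide⟩⟩

/-- **(§3).** For odd `n ≥ 1` not divisible by `3`: if `n ≡ 1 (mod 3)` then
`N(M_{n,α}) ≡ 1 (mod 7)`, and if `n ≡ 2 (mod 3)` then `N(M_{n,α}) ≡ 4 (mod 7)`.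
In particular `N(M_{n,α})` is a quadratic residue modulo `7`. -/
theorem norm_mersenne_mod_seven
    (n : ℕ) (hn1 : 1 ≤ n) (hodd : Odd n) (h3 : ¬ (3 ∣ n)) :
    (n % 3 = 1 → Zsqrtd.norm (Mers n) ≡ 1 [ZMOD 7]) ∧
    (n % 3 = 2 → Zsqrtd.norm (Mers n) ≡ 4 [ZMOD 7]) ∧
    IsSquare ((Zsqrtd.norm (Mers n) : ZMod 7)) :=
  norm_mersenne_mod_seven_general n hodd h3
end

section
/- For every odd integer n ≥ 5, N(M_{n,α}) ≡ 15 (mod 16) (i.e., N(M_{n,α}) ≡ −1 (mod 16)). -/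
open Zsqrtd

lemma alphaZ_eq_sqrtd_mul : alphaZ = sqrtd * (1 + sqrtd) := by
  ext <;> simp [alphaZ]

lemma norm_sqrtd_sub_one : (sqrtd - 1 : ℤ√2).norm = -1 := by
  simp [norm_def]

lemma norm_Mers (n : ℕ) : (Mers n).norm = -(alphaZ ^ n - 1).norm := by
  rw [Mers, norm_mul, norm_sqrtd_sub_one, mul_neg_one]

lemma sqrtd_pow_dvd_alphaZ_pow {m n : ℕ} (h : m ≤ n) : (sqrtd : ℤ√2) ^ m ∣ alphaZ ^ n :=
  (pow_dvd_pow _ h).trans (pow_dvd_pow_of_dvd ⟨1 + sqrtd, alphaZ_eq_sqrtd_mul⟩ n)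

/-- `(√2)⁵ y = 4√2 y = 8 y.im + 4 y.re √2` has rational part `≡ 0 mod 8` and `√2`-part `≡ 0 mod 4`. -/
lemma norm_sub_one_modEq_one_of_sqrtd_pow_five_dvd {x : ℤ√2} (h : sqrtd ^ 5 ∣ x) :
    (x - 1).norm ≡ 1 [ZMOD 16] := by
  obtain ⟨y, rfl⟩ := h
  have hnorm : (sqrtd ^ 5 * y - 1 : ℤ√2).norm
      = 1 + 16 * (4 * y.im ^ 2 - y.im - 2 * y.re ^ 2) := by
    simp only [norm_def, pow_succ, pow_zero, one_mul, re_sub, im_sub, re_mul, im_mul,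
      re_sqrtd, im_sqrtd, re_one, im_one]
    ring
  rw [hnorm]
  exact Int.add_modEq_left_iff.2 (dvd_mul_right _ _)

theorem norm_mersenne_mod_sixteen_general (n : ℕ) (hn : 5 ≤ n) :
    Zsqrtd.norm (Mers n) ≡ 15 [ZMOD 16] := by
  rw [norm_Mers]
  exact ((norm_sub_one_modEq_one_of_sqrtd_pow_five_dvd (sqrtd_pow_dvd_alphaZ_pow hn)).neg).trans
    (by decide)

/-- **(§3).** For every odd `n ≥ 5`, `N(M_{n,α}) ≡ -1 ≡ 15 (mod 16)`. -/
theorem norm_mersenne_mod_sixteen (n : ℕ) (hn : 5 ≤ n) (hodd : Odd n) :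
    Zsqrtd.norm (Mers n) ≡ 15 [ZMOD 16] :=
  norm_mersenne_mod_sixteen_general n hn
end

section
/- Let p ≥ 3 be an odd rational prime and suppose q = N(M_{p,α}) is a rational prime. Then 2 is a quadratic residue modulo q; that is, there exists an integer z with z² ≡ 2 (mod q). -/
/-!
If a prime `q` is a norm `a² - d b²`, then `q ∤ b` (otherwise `q² ∣ q`), so `b` is invertible
modulo `q` and `a b⁻¹` is a square root of `d` modulo `q`.
-/

namespace Zsqrtd

variable {d : ℤ}

theorem not_norm_dvd_im_of_prime_norm {x : ℤ√d} (hx : Prime x.norm) : ¬x.norm ∣ x.im := by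
  intro him
  have hre : x.norm ∣ x.re := by
    refine hx.dvd_of_dvd_pow (n := 2) ?_
    have : x.re ^ 2 = x.norm + d * x.im * x.im := by rw [norm_def]; ring
    rw [this]
    exact dvd_add dvd_rfl (dvd_mul_of_dvd_right him _)
  obtain ⟨a, ha⟩ := hre
  obtain ⟨b, hb⟩ := him
  have hsq : x.norm * x.norm ∣ x.norm * 1 :=
    ⟨a * a - d * b * b, by
      linear_combination norm_def x + (x.re + x.norm * a) * ha - d * (x.im + x.norm * b) * hb⟩
  exact hx.not_isUnit (isUnit_of_dvd_one ((mul_dvd_mul_iff_left hx.ne_zero).mp hsq))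

theorem exists_sq_modEq_of_prime_norm {x : ℤ√d} (hx : Prime x.norm) :
    ∃ z : ℤ, z ^ 2 ≡ d [ZMOD x.norm] := by
  obtain ⟨u, v, huv⟩ := hx.coprime_iff_not_dvd.mpr (not_norm_dvd_im_of_prime_norm hx)
  refine ⟨x.re * v, (Int.modEq_iff_dvd.mpr ⟨v ^ 2 - d * u * (v * x.im + 1), ?_⟩).symm⟩
  linear_combination (-(v ^ 2)) * norm_def x + d * (v * x.im + 1) * huv

end Zsqrtd

theorem two_is_qr_mod_norm_mersenne_general (p : ℕ) (hprime : Prime (Zsqrtd.norm (Mers p))) :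
    ∃ z : ℤ, z ^ 2 ≡ 2 [ZMOD Zsqrtd.norm (Mers p)] :=
  Zsqrtd.exists_sq_modEq_of_prime_norm hprime

/-- **(Property 6, §1).** If `p ≥ 3` is an odd rational prime and `q = N(M_{p,α})` is
a rational prime, then `2` is a quadratic residue modulo `q`. -/
theorem two_is_qr_mod_norm_mersenne (p : ℕ) (hp3 : 3 ≤ p) (hp : Nat.Prime p)
    (hodd : Odd p) (hprime : Prime (Zsqrtd.norm (Mers p))) :
    ∃ z : ℤ, z ^ 2 ≡ 2 [ZMOD Zsqrtd.norm (Mers p)] :=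
  two_is_qr_mod_norm_mersenne_general p hprime
end
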